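/- Let q be a prime power and let k ≥ b ≥ 1 be integers. Then there is no F_q-linear code of length q^k and dimension k + 1 whose minimum b-symbol distance is greater than or equal to q^k - q^{k-b} + 1. In particular, a code of length q^k, dimension k + 1 and minimum b-symbol distance q^k - q^{k-b} is distance-optimal. -/

import Mathlib

/-! Summing the `b`-symbol weights of all codewords of a code `C` of dimension `r` position by
position, each window `(c_i, …, c_{i+b-1})` is a linear map of rank at most `b`, so it vanishes on
at least `q^(r-b)` codewords; hence the total weight is at most `n (q^r - q^(r-b))`. For `n = q^k`
and `r = k + 1`, this is smaller than `(q^(k+1) - 1)(q^k - q^(k-b) + 1)`, the total forced by the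
assumed minimum distance. -/

/-- The `b`-symbol weight of a vector `c ∈ F^n` (coordinates indexed cyclically by `ZMod n`). -/
noncomputable def bWt {n : ℕ} {F : Type*} [Zero F] (b : ℕ) (c : ZMod n → F) : ℕ :=
  Nat.card {i : ZMod n | ∃ j < b, c (i + (j : ZMod n)) ≠ 0}

open Finset Module

section Counting

variable {F : Type*} [Field F] [Fintype F]

theorem card_pow_sub_finrank_le_card_filter_eq_zero {V W : Type*} [AddCommGroup V] [Module F V]
    [Fintype V] [AddCommGroup W] [Module F W] [FiniteDimensional F W] [DecidableEq W]
    (f : V →ₗ[F] W) :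
    Fintype.card F ^ (finrank F V - finrank F W) ≤ #{v | f v = 0} := by
  have hker : finrank F V - finrank F W ≤ finrank F (LinearMap.ker f) := by
    have := f.finrank_range_add_finrank_ker
    have := Submodule.finrank_le (LinearMap.range f)
    omega
  calc Fintype.card F ^ (finrank F V - finrank F W)
      ≤ Nat.card F ^ finrank F (LinearMap.ker f) := by
        rw [Nat.card_eq_fintype_card]
        exact Nat.pow_le_pow_right Fintype.card_pos hker
    _ = #{v | f v = 0} := by
        rw [← Module.natCard_eq_pow_finrank, ← Fintype.card_subtype, ← Nat.card_eq_fintype_card]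
        rfl

theorem card_filter_ne_zero_le {V W : Type*} [AddCommGroup V] [Module F V]
    [Fintype V] [AddCommGroup W] [Module F W] [FiniteDimensional F W] [DecidableEq W]
    (f : V →ₗ[F] W) :
    #{v | f v ≠ 0} ≤
      Fintype.card F ^ finrank F V - Fintype.card F ^ (finrank F V - finrank F W) := by
  have hsplit := card_filter_add_card_filter_not (s := univ) (fun v => f v = 0)
  rw [card_univ, Module.card_eq_pow_finrank (K := F)] at hsplit
  simp only [← ne_eq] at hsplit
  have := card_pow_sub_finrank_le_card_filter_eq_zero f
  omega

end Counting

section SymbolWeight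

variable {F : Type*} [Field F] {n : ℕ}

def window (b : ℕ) (i : ZMod n) : (ZMod n → F) →ₗ[F] (Fin b → F) :=
  LinearMap.pi fun j : Fin b => LinearMap.proj (i + ((j : ℕ) : ZMod n))

theorem window_ne_zero_iff {b : ℕ} {i : ZMod n} {c : ZMod n → F} :
    window b i c ≠ 0 ↔ ∃ j < b, c (i + (j : ZMod n)) ≠ 0 := by
  simp [window, funext_iff, Fin.exists_iff]

theorem bWt_eq_card_window [NeZero n] [DecidableEq F] (b : ℕ) (c : ZMod n → F) :
    bWt b c = #{i | window b i c ≠ 0} := by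
  simp only [window_ne_zero_iff]
  rw [← Fintype.card_subtype, ← Nat.card_eq_fintype_card]
  rfl

end SymbolWeight

section Plotkin

variable {F : Type*} [Field F] {n : ℕ} (b : ℕ) (C : Submodule F (ZMod n → F)) [Fintype C]

theorem card_sub_one_mul_le_sum_bWt {d : ℕ} (hmin : ∀ c ∈ C, c ≠ 0 → d ≤ bWt b c) :
    (Fintype.card C - 1) * d ≤ ∑ c : C, bWt b (c : ZMod n → F) := by
  classical
  calc (Fintype.card C - 1) * d = #(univ.erase (0 : C)) • d := by
        rw [card_erase_of_mem (mem_univ _), card_univ, smul_eq_mul]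
    _ ≤ ∑ c ∈ univ.erase (0 : C), bWt b (c : ZMod n → F) :=
        card_nsmul_le_sum _ _ _ fun c hc =>
          hmin c c.2 (by simpa using ne_of_mem_erase hc)
    _ ≤ ∑ c : C, bWt b (c : ZMod n → F) := sum_le_sum_of_subset (erase_subset _ _)

theorem sum_bWt_le [Fintype F] [DecidableEq F] [NeZero n] :
    ∑ c : C, bWt b (c : ZMod n → F) ≤
      n * (Fintype.card F ^ finrank F C - Fintype.card F ^ (finrank F C - b)) :=
  calc ∑ c : C, bWt b (c : ZMod n → F)
      = ∑ i : ZMod n, #{c : C | window b i (c : ZMod n → F) ≠ 0} := by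
        simp only [bWt_eq_card_window, card_filter]
        exact sum_comm
    _ ≤ ∑ _i : ZMod n, (Fintype.card F ^ finrank F C - Fintype.card F ^ (finrank F C - b)) :=
        sum_le_sum fun i _ => by
          have := card_filter_ne_zero_le ((window b i).comp C.subtype)
          rwa [finrank_fin_fun] at this
    _ = n * (Fintype.card F ^ finrank F C - Fintype.card F ^ (finrank F C - b)) := by
        rw [sum_const, card_univ, ZMod.card, smul_eq_mul]

end Plotkin

theorem pow_mul_sub_pow_lt {q k b : ℕ} (hq : 2 ≤ q) (hkb : b ≤ k) :
    q ^ k * (q ^ (k + 1) - q ^ (k + 1 - b)) < (q ^ (k + 1) - 1) * (q ^ k - q ^ (k - b) + 1) := by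
  obtain ⟨m, rfl⟩ := Nat.exists_eq_add_of_le hkb
  rw [show b + m + 1 - b = m + 1 by omega, Nat.add_sub_cancel_left]
  have hm : 1 ≤ q ^ m := Nat.one_le_pow _ _ (by omega)
  have hmb : q ^ m ≤ q ^ (b + m) := Nat.pow_le_pow_right (by omega) (by omega)
  have hmq : q * q ^ m ≤ q * q ^ (b + m) := Nat.mul_le_mul_left _ hmb
  simp only [pow_succ'] at *
  -- with `N = q^k`, `x = q^(k-b)`: the difference of the two sides is `(q - 1) N + x - 1 > 0`
  zify [hmb, hmq, Nat.one_le_iff_ne_zero.mpr (by positivity : q * q ^ (b + m) ≠ 0)]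
  nlinarith

theorem stmt16_general (q k b : ℕ) (hkb : b ≤ k)
    (F : Type*) [Field F] [Fintype F] (hF : Fintype.card F = q) :
    ¬ ∃ C : Submodule F (ZMod (q ^ k) → F),
        Module.finrank F C = k + 1 ∧
        ∀ c ∈ C, c ≠ 0 → q ^ k - q ^ (k - b) + 1 ≤ bWt b c := by
  classical
  rintro ⟨C, hrank, hmin⟩
  have hq : 2 ≤ q := hF ▸ Fintype.one_lt_card
  have : NeZero (q ^ k) := ⟨by positivity⟩
  have : Fintype C := Fintype.ofFinite C
  have hcard : Fintype.card C = q ^ (k + 1) := by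
    rw [Module.card_eq_pow_finrank (K := F), hF, hrank]
  have hlow := card_sub_one_mul_le_sum_bWt b C hmin
  have hup := sum_bWt_le b C
  rw [hcard] at hlow
  rw [hF, hrank] at hup
  exact (pow_mul_sub_pow_lt hq hkb).not_ge (hlow.trans hup)

/-- There is no `F_q`-linear code of length `q^k` and dimension `k+1` all of whose
nonzero codewords have `b`-symbol weight `≥ q^k - q^{k-b} + 1` (i.e. with minimum
`b`-symbol distance `≥ q^k - q^{k-b} + 1`). -/
theorem stmt16 (q k b : ℕ) (hb : 1 ≤ b) (hkb : b ≤ k)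
    (F : Type*) [Field F] [Fintype F] (hF : Fintype.card F = q) :
    ¬ ∃ C : Submodule F (ZMod (q ^ k) → F),
        Module.finrank F C = k + 1 ∧
        ∀ c ∈ C, c ≠ 0 → q ^ k - q ^ (k - b) + 1 ≤ bWt b c :=
  stmt16_general q k b hkb F hF
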